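/- Let λ ↦ P_λ be a continuously differentiable family of n×n unitary matrices over ℂ and λ ↦ K_λ a continuously differentiable family of real diagonal n×n matrices, and set H_λ = P_λ K_λ P_λ† (so H_λ is Hermitian). For T > 0 let ρ_{λ,T} = exp(-H_λ/T)/Tr[exp(-H_λ/T)]. Then for all λ and all T > 0, Tr[ρ_{λ,T} · ∂_λ H_λ] = Tr[ρ_{λ,T} · P_λ (∂_λ K_λ) P_λ†]; that is, the generator G_λ = ∂_λ H_λ has the same Gibbs expectation as the operator P_λ (∂_λ K_λ) P_λ†, which is diagonal in the eigenbasis of ρ_{λ,T}. -/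

import Mathlib

open scoped Classical

open Matrix Filter Asymptotics ComplexOrder

/-- Positive-semidefinite matrix square root (0 if not PSD). -/
noncomputable def msqrt {m : Type*} [Fintype m] [DecidableEq m] (A : Matrix m m ℂ) :
    Matrix m m ℂ :=
  if h : A.PosSemidef then
    (h.1.eigenvectorUnitary : Matrix m m ℂ) *
      diagonal ((↑) ∘ (Real.sqrt ·) ∘ h.1.eigenvalues) *
      (star h.1.eigenvectorUnitary : Matrix m m ℂ)
  else 0

/-- Fidelity between density matrices. -/
noncomputable def Fid {m : Type*} [Fintype m] [DecidableEq m] (ρ σ : Matrix m m ℂ) : ℝ :=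
  ((msqrt (msqrt ρ * σ * msqrt ρ)).trace).re ^ 2

/-- Quantum Fisher information of a family of states at a point. -/
noncomputable def QFI {m : Type*} [Fintype m] [DecidableEq m] (ρ : ℝ → Matrix m m ℂ) (ξ : ℝ) : ℝ :=
  -2 * iteratedDeriv 2 (fun ε => Fid (ρ ξ) (ρ (ξ + ε))) 0

/-- Gibbs state exp((-1/T) H)/Z. -/
noncomputable def gibbs {m : Type*} [Fintype m] [DecidableEq m] (H : Matrix m m ℂ) (T : ℝ) :
    Matrix m m ℂ :=
  ((NormedSpace.exp ((-(T : ℂ)⁻¹) • H)).trace)⁻¹ • NormedSpace.exp ((-(T : ℂ)⁻¹) • H)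

/-- Von Neumann entropy. -/
noncomputable def vnEntropy {m : Type*} [Fintype m] [DecidableEq m] (ρ : Matrix m m ℂ) : ℝ :=
  if h : ρ.IsHermitian then -∑ i, h.eigenvalues i * Real.log (h.eigenvalues i) else 0

/-- For `H_λ = P_λ K_λ P_λ†` with `P_λ` unitary and `K_λ` real diagonal
(both C¹ in λ), the generator `G_λ = ∂_λ H_λ` has the same Gibbs expectation as
`P_λ (∂_λ K_λ) P_λ†`, which is diagonal in the eigenbasis of `ρ_{λ,T}`. -/
theorem stmt14 {n : ℕ}
    (P : ℝ → Matrix (Fin n) (Fin n) ℂ)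
    (hP : ∀ lam, P lam ∈ Matrix.unitaryGroup (Fin n) ℂ)
    (K : ℝ → Fin n → ℝ)
    -- continuously differentiable families, with ∂_λ P_λ = P'_λ and ∂_λ K_λ = K'_λ
    (P' : ℝ → Matrix (Fin n) (Fin n) ℂ) (K' : ℝ → Fin n → ℝ)
    (hP' : ∀ lam i j, HasDerivAt (fun lam' => P lam' i j) (P' lam i j) lam)
    (hP'cont : ∀ i j, Continuous (fun lam => P' lam i j))
    (hK' : ∀ lam i, HasDerivAt (fun lam' => K lam' i) (K' lam i) lam)
    (hK'cont : ∀ i, Continuous (fun lam => K' lam i))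
    (H G : ℝ → Matrix (Fin n) (Fin n) ℂ)
    (hH : ∀ lam, H lam =
      P lam * Matrix.diagonal (fun i => (K lam i : ℂ)) * (P lam)ᴴ)
    (hG : ∀ lam i j, HasDerivAt (fun lam' => H lam' i j) (G lam i j) lam) :
    ∀ (lam T : ℝ), 0 < T →
      (gibbs (H lam) T * G lam).trace =
        (gibbs (H lam) T *
          (P lam * Matrix.diagonal (fun i => (K' lam i : ℂ)) * (P lam)ᴴ)).trace := by
  intro lam T hT
  set Q := P lam with hQ
  set Q' := P' lam with hQ'
  set Dm : Matrix (Fin n) (Fin n) ℂ := Matrix.diagonal (fun i => (K lam i : ℂ)) with hDm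
  set Dm' : Matrix (Fin n) (Fin n) ℂ := Matrix.diagonal (fun i => (K' lam i : ℂ)) with hDm'
  -- unitarity
  have hQ1 : Qᴴ * Q = 1 := by
    have := Matrix.mem_unitaryGroup_iff'.mp (hP lam)
    simpa [Matrix.star_eq_conjTranspose] using this
  have hQ2 : Q * Qᴴ = 1 := by
    have := Matrix.mem_unitaryGroup_iff.mp (hP lam)
    simpa [Matrix.star_eq_conjTranspose] using this
  -- entries of A * diagonal v * Bᴴ
  have entry : ∀ (A B : Matrix (Fin n) (Fin n) ℂ) (v : Fin n → ℂ) (i j : Fin n),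
      (A * Matrix.diagonal v * Bᴴ) i j = ∑ k, A i k * v k * star (B j k) := by
    intro A B v i j
    simp [Matrix.mul_apply, Matrix.diagonal_apply, Matrix.conjTranspose_apply,
      Finset.sum_ite_eq, Finset.sum_ite_eq', ite_mul, mul_ite, mul_zero, zero_mul]
  -- Step A : G lam = Q' Dm Qᴴ + Q Dm' Qᴴ + Q Dm Q'ᴴ
  have hGmat : G lam = Q' * Dm * Qᴴ + Q * Dm' * Qᴴ + Q * Dm * Q'ᴴ := by
    funext i j
    have hderiv : HasDerivAt (fun l => H l i j)
        ((Q' * Dm * Qᴴ + Q * Dm' * Qᴴ + Q * Dm * Q'ᴴ) i j) lam := by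
      have hfun : (fun l => H l i j) =
          fun l => ∑ k, P l i k * (K l k : ℂ) * star (P l j k) := by
        funext l
        rw [hH l]
        exact entry _ _ _ i j
      rw [hfun]
      have hterm : ∀ k : Fin n, HasDerivAt (fun l => P l i k * (K l k : ℂ) * star (P l j k))
          (Q' i k * (K lam k : ℂ) * star (Q j k) + Q i k * (K' lam k : ℂ) * star (Q j k)
            + Q i k * (K lam k : ℂ) * star (Q' j k)) lam := by
        intro k
        have h1 := (hP' lam i k).fun_mul ((hK' lam k).ofReal_comp)
        have h2 := h1.fun_mul ((hP' lam j k).star)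
        refine h2.congr_deriv ?_
        ring
      have := HasDerivAt.fun_sum (u := Finset.univ) (fun k _ => hterm k)
      refine this.congr_deriv ?_
      simp only [Matrix.add_apply, hDm, hDm', entry]
      rw [← Finset.sum_add_distrib, ← Finset.sum_add_distrib]
    exact (hG lam i j).unique hderiv
  -- Step B : Q'ᴴ Q + Qᴴ Q' = 0
  have hAnti : Q'ᴴ * Q + Qᴴ * Q' = 0 := by
    ext i j
    have hconst : (fun l => ∑ k, star (P l k i) * P l k j) = fun _ => (1 : Matrix (Fin n) (Fin n) ℂ) i j := by
      funext l
      have h1 : (P l)ᴴ * P l = 1 := by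
        have := Matrix.mem_unitaryGroup_iff'.mp (hP l)
        simpa [Matrix.star_eq_conjTranspose] using this
      calc ∑ k, star (P l k i) * P l k j = ((P l)ᴴ * P l) i j := by
            simp [Matrix.mul_apply, Matrix.conjTranspose_apply]
        _ = (1 : Matrix (Fin n) (Fin n) ℂ) i j := by rw [h1]
    have hd1 : HasDerivAt (fun l => ∑ k, star (P l k i) * P l k j)
        (∑ k, (star (Q' k i) * Q k j + star (Q k i) * Q' k j)) lam :=
      HasDerivAt.fun_sum (u := Finset.univ) (fun k _ => ((hP' lam k i).star.mul (hP' lam k j)))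
    have hd2 : HasDerivAt (fun l => ∑ k, star (P l k i) * P l k j) 0 lam := by
      rw [hconst]; exact hasDerivAt_const _ _
    have hz := hd1.unique hd2
    calc (Q'ᴴ * Q + Qᴴ * Q') i j
        = ∑ k, (star (Q' k i) * Q k j + star (Q k i) * Q' k j) := by
          simp [Matrix.add_apply, Matrix.mul_apply, Matrix.conjTranspose_apply,
            Finset.sum_add_distrib]
      _ = 0 := hz
  have hQ'Q : Q'ᴴ * Q = -(Qᴴ * Q') := eq_neg_of_add_eq_zero_left hAnti
  -- Step C : exp conjugation
  have hQinv : Q⁻¹ = Qᴴ := Matrix.inv_eq_left_inv hQ1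
  have hQunit : IsUnit Q := ⟨⟨Q, Qᴴ, hQ2, hQ1⟩, rfl⟩
  set M : Matrix (Fin n) (Fin n) ℂ :=
    Matrix.diagonal (fun i => NormedSpace.exp ((-(T:ℂ)⁻¹) * (K lam i : ℂ))) with hM
  have hexp : NormedSpace.exp ((-(T : ℂ)⁻¹) • H lam) = Q * M * Qᴴ := by
    rw [hH lam]
    have h1 : (-(T:ℂ)⁻¹) • (Q * Dm * Qᴴ) = Q * ((-(T:ℂ)⁻¹) • Dm) * Q⁻¹ := by
      rw [hQinv, Matrix.mul_smul, Matrix.smul_mul]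
    rw [h1, Matrix.exp_conj Q ((-(T:ℂ)⁻¹) • Dm) hQunit, hQinv]
    have h2 : (-(T:ℂ)⁻¹) • Dm = Matrix.diagonal (fun i => (-(T:ℂ)⁻¹) * (K lam i : ℂ)) := by
      rw [hDm, ← Matrix.diagonal_smul]
      rfl
    rw [h2, Matrix.exp_diagonal, hM, Pi.exp_def]
  -- commutation of diagonal matrices
  have hcomm : Dm * M = M * Dm := by
    rw [hDm, hM, Matrix.diagonal_mul_diagonal, Matrix.diagonal_mul_diagonal]
    exact congrArg Matrix.diagonal (funext fun i => mul_comm _ _)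
  -- Step D : the trace computation
  have key : (Q * M * Qᴴ * (G lam)).trace =
      (Q * M * Qᴴ * (Q * Dm' * Qᴴ)).trace := by
    rw [hGmat]
    have e1 : Q * M * Qᴴ * (Q' * Dm * Qᴴ + Q * Dm' * Qᴴ + Q * Dm * Q'ᴴ)
        = Q * M * Qᴴ * (Q' * Dm * Qᴴ) + Q * M * Qᴴ * (Q * Dm' * Qᴴ)
          + Q * M * Qᴴ * (Q * Dm * Q'ᴴ) := by
      rw [mul_add, mul_add]
    rw [e1, Matrix.trace_add, Matrix.trace_add]
    have t1 : (Q * M * Qᴴ * (Q' * Dm * Qᴴ)).trace = (M * (Qᴴ * Q') * Dm).trace := by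
      have : Q * M * Qᴴ * (Q' * Dm * Qᴴ) = Q * (M * (Qᴴ * Q') * Dm * Qᴴ) := by
        simp only [Matrix.mul_assoc]
      rw [this, Matrix.trace_mul_comm]
      have : M * (Qᴴ * Q') * Dm * Qᴴ * Q = M * (Qᴴ * Q') * Dm * (Qᴴ * Q) := by
        simp only [Matrix.mul_assoc]
      rw [this, hQ1, mul_one]
    have t2 : (Q * M * Qᴴ * (Q * Dm * Q'ᴴ)).trace = -(M * (Qᴴ * Q') * Dm).trace := by
      have h3 : Q * M * Qᴴ * (Q * Dm * Q'ᴴ) = Q * (M * (Qᴴ * Q) * Dm * Q'ᴴ) := by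
        simp only [Matrix.mul_assoc]
      rw [h3, hQ1, mul_one, Matrix.trace_mul_comm]
      have h4 : M * Dm * Q'ᴴ * Q = M * Dm * (Q'ᴴ * Q) := by
        simp only [Matrix.mul_assoc]
      rw [h4, hQ'Q, mul_neg, Matrix.trace_neg, neg_inj]
      -- trace (M * Dm * (Qᴴ*Q')) = trace (M * (Qᴴ*Q') * Dm)
      rw [Matrix.trace_mul_cycle M (Qᴴ * Q') Dm, hcomm]
    rw [t1, t2]; ring
  -- conclude
  unfold gibbs
  rw [hexp, Matrix.smul_mul, Matrix.smul_mul, Matrix.trace_smul, Matrix.trace_smul, key]
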